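/- arXiv:quant-ph/0601090 — 9 statements merged into one kernel-verified Lean document; each statement's English description precedes it below -/
import Mathlib

section
/- Let ι be a nonempty finite type and A a square complex matrix indexed by ι × ι. Then the following are equivalent: (i) there exists a nonzero vector ξ ∈ ℂ^ι such that for every i ∈ ι, ξ_i · (∑_{j} conj(ξ_j) · A_{j,i}) = 0 (i.e. every diagonal entry of (ξ·ξᴴ)·A vanishes); (ii) there exists a nonempty subset I ⊆ ι such that the principal submatrix of A with both rows and columns restricted to I has determinant 0. -/
open Matrix Finset

/-- **Theorem 2 (matrix-theoretic core).** There is a nonzero vector `ξ` nullifying the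
diagonal of `|ξ⟩⟨ξ| A` iff `A` has a singular principal submatrix (same row and column
index set). -/
theorem diag_zero_iff_singular_principal_submatrix
    {ι : Type*} [Fintype ι] [DecidableEq ι] [Nonempty ι] (A : Matrix ι ι ℂ) :
    (∃ ξ : ι → ℂ, ξ ≠ 0 ∧
        ∀ i, ξ i * (∑ j, (starRingEnd ℂ) (ξ j) * A j i) = 0)
      ↔ (∃ I : Finset ι, I.Nonempty ∧
          (A.submatrix (Subtype.val : I → ι) (Subtype.val : I → ι)).det = 0) := by
  constructor
  · rintro ⟨ξ, hξ, h⟩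
    set I : Finset ι := Finset.univ.filter (fun i => ξ i ≠ 0) with hI
    have hmem : ∀ i, i ∈ I ↔ ξ i ≠ 0 := by intro i; simp [hI]
    obtain ⟨i0, hi0⟩ := Function.ne_iff.mp hξ
    have hi0' : ξ i0 ≠ 0 := hi0
    refine ⟨I, ⟨i0, (hmem i0).mpr hi0'⟩, ?_⟩
    rw [← Matrix.det_transpose, ← Matrix.exists_mulVec_eq_zero_iff]
    refine ⟨fun j => (starRingEnd ℂ) (ξ j.val), ?_, ?_⟩
    · intro hv
      have := congrFun hv ⟨i0, (hmem i0).mpr hi0'⟩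
      simp only [Pi.zero_apply, map_eq_zero] at this
      exact hi0' this
    · funext i
      have hiI : ξ i.val ≠ 0 := (hmem i.val).mp i.property
      have hsum : (∑ j, (starRingEnd ℂ) (ξ j) * A j i.val) = 0 :=
        (mul_eq_zero.mp (h i.val)).resolve_left hiI
      have key : (∑ j : I, (starRingEnd ℂ) (ξ j.val) * A j.val i.val)
          = ∑ j, (starRingEnd ℂ) (ξ j) * A j i.val := by
        rw [Finset.sum_coe_sort I (fun j => (starRingEnd ℂ) (ξ j) * A j i.val)]
        refine Finset.sum_subset (Finset.subset_univ I) ?_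
        intro j _ hj
        have : ξ j = 0 := by
          by_contra hne
          exact hj ((hmem j).mpr hne)
        simp [this]
      simp only [Matrix.mulVec, dotProduct, Matrix.transpose_apply,
        Matrix.submatrix_apply, Pi.zero_apply]
      calc (∑ j : I, A j.val i.val * (starRingEnd ℂ) (ξ j.val))
          = ∑ j : I, (starRingEnd ℂ) (ξ j.val) * A j.val i.val := by
            simp [mul_comm]
        _ = 0 := by rw [key, hsum]
  · rintro ⟨I, ⟨i0, hi0⟩, hdet⟩
    have hdet' : (A.submatrix (Subtype.val : I → ι) (Subtype.val : I → ι))ᵀ.det = 0 := by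
      rw [Matrix.det_transpose]; exact hdet
    obtain ⟨v, hv, hmul⟩ := (Matrix.exists_mulVec_eq_zero_iff).mpr hdet'
    refine ⟨fun i => if h : i ∈ I then (starRingEnd ℂ) (v ⟨i, h⟩) else 0, ?_, ?_⟩
    · intro hz
      apply hv
      funext j
      have := congrFun hz j.val
      simp only [j.property, dif_pos, Subtype.coe_eta, Pi.zero_apply, map_eq_zero] at this
      exact this
    · intro i
      by_cases hiI : i ∈ I
      · have hrow : (∑ j : I, A j.val i * v j) = 0 := by
          have := congrFun hmul ⟨i, hiI⟩
          simpa [Matrix.mulVec, dotProduct] using this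
        have : (∑ j, (starRingEnd ℂ)
            (if h : j ∈ I then (starRingEnd ℂ) (v ⟨j, h⟩) else 0) * A j i) = 0 := by
          rw [← Finset.sum_subset (Finset.subset_univ I) (by
            intro j _ hj
            simp [hj])]
          rw [← Finset.sum_coe_sort I
            (fun j => (starRingEnd ℂ) (if h : j ∈ I then (starRingEnd ℂ) (v ⟨j, h⟩) else 0) * A j i)]
          calc (∑ j : I, (starRingEnd ℂ)
                (if h : j.val ∈ I then (starRingEnd ℂ) (v ⟨j.val, h⟩) else 0) * A j.val i)
              = ∑ j : I, v j * A j.val i := by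
                refine Finset.sum_congr rfl ?_
                intro j _
                simp [j.property]
            _ = ∑ j : I, A j.val i * v j := by simp [mul_comm]
            _ = 0 := hrow
        rw [this, mul_zero]
      · simp [hiI]
end

section
/- Let d, n ≥ 1, let U_M and U_N be unitary d×d complex matrices, set U = U_Mᴴ · U_N, and let D denote the index type Fin n → Fin d. Then the following are equivalent: (i) there exists a unit vector ξ' ∈ ℂ^(D × D) such that for every i ∈ D, ⟨ξ', ((ψ_i · φ_iᴴ) ⊗ₖ 1) .mulVec ξ'⟩ = 0, where φ_i = (U_M)^{⊗n}.mulVec(e_i), ψ_i = (U_N)^{⊗n}.mulVec(e_i), ⊗ₖ is the Kronecker product with the identity matrix indexed by D, and ψ_i · φ_iᴴ is the rank-one matrix with (k,l) entry ψ_i(k)·conj(φ_i(l)); (ii) there exists a complex matrix ρ indexed by D × D that is positive semidefinite with trace 1 such that every diagonal entry of ρ · U^{⊗n} is zero. -/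
open Matrix Finset Kronecker
open scoped ComplexOrder

/-- The `n`-fold Kronecker power of a `d × d` matrix, indexed by outcome
sequences `Fin n → Fin d`. -/
noncomputable def kronPow {d : ℕ} (V : Matrix (Fin d) (Fin d) ℂ) (n : ℕ) :
    Matrix (Fin n → Fin d) (Fin n → Fin d) ℂ :=
  fun i j => ∏ k, V (i k) (j k)

lemma kronPow_mul {d : ℕ} (A B : Matrix (Fin d) (Fin d) ℂ) (n : ℕ) :
    kronPow (A * B) n = kronPow A n * kronPow B n := by
  ext i j
  simp only [kronPow, Matrix.mul_apply]
  rw [Finset.prod_univ_sum (fun _ : Fin n => (Finset.univ : Finset (Fin d)))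
    (fun k m => A (i k) m * B m (j k)), Fintype.piFinset_univ]
  exact Finset.sum_congr rfl fun m _ => Finset.prod_mul_distrib

lemma kronPow_one {d n : ℕ} : kronPow (1 : Matrix (Fin d) (Fin d) ℂ) n = 1 := by
  ext i j
  simp [kronPow, Matrix.one_apply, Finset.prod_boole, funext_iff]

lemma kronPow_conjTranspose {d : ℕ} (A : Matrix (Fin d) (Fin d) ℂ) (n : ℕ) :
    kronPow Aᴴ n = (kronPow A n)ᴴ := by
  ext i j
  simp [kronPow, conjTranspose_apply, map_prod]

lemma unit_dot {m : Type*} [Fintype m] [DecidableEq m] (A : Matrix m m ℂ) (h : Aᴴ * A = 1) (v : m → ℂ) :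
    star (A.mulVec v) ⬝ᵥ A.mulVec v = star v ⬝ᵥ v := by
  rw [star_mulVec, dotProduct_mulVec, vecMul_vecMul, h, vecMul_one]

lemma trace_eq {d n : ℕ} (W_M : Matrix (Fin n → Fin d) (Fin n → Fin d) ℂ)
    (hWM : W_Mᴴ * W_M = 1) (y : (Fin n → Fin d) → (Fin n → Fin d) → ℂ) :
    star (fun p : (Fin n → Fin d) × (Fin n → Fin d) => (W_M.mulVec (y p.2)) p.1) ⬝ᵥ
        (fun p : (Fin n → Fin d) × (Fin n → Fin d) => (W_M.mulVec (y p.2)) p.1)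
      = ((Matrix.of fun b k => star (y b k))ᴴ * Matrix.of (fun b k => star (y b k))).trace := by
  have h1 : ∀ b, star (W_M.mulVec (y b)) ⬝ᵥ W_M.mulVec (y b) = star (y b) ⬝ᵥ y b :=
    fun b => unit_dot W_M hWM (y b)
  simp only [dotProduct, Pi.star_apply, Fintype.sum_prod_type, Matrix.trace, Matrix.diag, mul_apply,
    conjTranspose_apply, of_apply, star_star]
  rw [Finset.sum_comm]
  conv_rhs => rw [Finset.sum_comm]
  refine Finset.sum_congr rfl fun b _ => ?_
  have := h1 b
  simp only [dotProduct, Pi.star_apply] at this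
  rw [this]
  refine Finset.sum_congr rfl fun k _ => ?_
  simp [conjTranspose_apply, of_apply, star_star, mul_comm]

lemma diag_eq {d n : ℕ} (W_M W_N : Matrix (Fin n → Fin d) (Fin n → Fin d) ℂ)
    (hWM : W_Mᴴ * W_M = 1) (y : (Fin n → Fin d) → (Fin n → Fin d) → ℂ) (i : Fin n → Fin d) :
    ∑ b, (starRingEnd ℂ) ((W_Nᴴ.mulVec fun a => (W_M.mulVec (y b)) a) i)
        * ((W_Mᴴ.mulVec fun a => (W_M.mulVec (y b)) a) i)
      = ((Matrix.of fun b k => star (y b k))ᴴ * Matrix.of (fun b k => star (y b k))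
          * (W_Mᴴ * W_N)) i i := by
  have h1 : ∀ b, (W_Mᴴ.mulVec fun a => (W_M.mulVec (y b)) a) = y b := by
    intro b
    show W_Mᴴ *ᵥ (W_M *ᵥ y b) = y b
    rw [mulVec_mulVec, hWM, one_mulVec]
  have h2 : ∀ b, (W_Nᴴ.mulVec fun a => (W_M.mulVec (y b)) a) = (W_Nᴴ * W_M).mulVec (y b) := by
    intro b; show W_Nᴴ *ᵥ (W_M *ᵥ y b) = _; rw [mulVec_mulVec]
  simp only [h1, h2]
  simp only [Matrix.mul_apply, mulVec, dotProduct, conjTranspose_apply, of_apply, star_star,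
    map_sum, _root_.map_mul, Complex.conj_conj, RCLike.star_def,
    Finset.sum_mul, Finset.mul_sum]
  rw [Finset.sum_comm]
  refine Finset.sum_congr rfl fun l _ => ?_
  rw [Finset.sum_comm]
  refine Finset.sum_congr rfl fun b _ => ?_
  refine Finset.sum_congr rfl fun c _ => ?_
  ring

lemma key_identity {d n : ℕ} (W_M W_N : Matrix (Fin n → Fin d) (Fin n → Fin d) ℂ)
    (ξ' : (Fin n → Fin d) × (Fin n → Fin d) → ℂ) (i : Fin n → Fin d) :
    star ξ' ⬝ᵥ
      ((vecMulVec (W_N.mulVec (fun j => if j = i then (1 : ℂ) else 0))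
            (star (W_M.mulVec (fun j => if j = i then (1 : ℂ) else 0)))
          ⊗ₖ (1 : Matrix (Fin n → Fin d) (Fin n → Fin d) ℂ)).mulVec ξ')
    = ∑ b, (starRingEnd ℂ) ((W_Nᴴ.mulVec (fun a => ξ' (a, b))) i)
          * ((W_Mᴴ.mulVec (fun a => ξ' (a, b))) i) := by
  have hψ : W_N.mulVec (fun j => if j = i then (1 : ℂ) else 0) = fun a => W_N a i := by
    funext a; simp [mulVec, dotProduct]
  have hφ : W_M.mulVec (fun j => if j = i then (1 : ℂ) else 0) = fun a => W_M a i := by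
    funext a; simp [mulVec, dotProduct]
  rw [hψ, hφ]
  simp only [dotProduct, mulVec, vecMulVec_apply, kroneckerMap_apply, conjTranspose_apply,
    Pi.star_apply, RCLike.star_def, Matrix.one_apply, Fintype.sum_prod_type]
  simp only [mul_ite, mul_one, mul_zero, ite_mul, zero_mul, Finset.sum_ite_eq', Finset.sum_ite_eq,
    Finset.mem_univ, if_true]
  rw [Finset.sum_comm]
  refine Finset.sum_congr rfl fun b _ => ?_
  rw [map_sum, Finset.sum_mul]
  refine Finset.sum_congr rfl fun x _ => ?_
  rw [Finset.mul_sum, Finset.mul_sum]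
  refine Finset.sum_congr rfl fun y _ => ?_
  simp only [_root_.map_mul, Complex.conj_conj]
  ring

/-- **Theorem 3 (M–M scheme).** For unitary `U_M`, `U_N` with correlation unitary
`U = U_Mᴴ * U_N`, there is a unit vector `ξ'` on system-plus-ancilla whose
sub-normalized post-measurement residual states for each outcome sequence `i` are
orthogonal, iff there is a density matrix `ρ` nullifying the diagonal of `ρ U^{⊗n}`. -/
theorem mm_scheme_iff_density_diag_zero
    (d n : ℕ) (hd : 1 ≤ d) (hn : 1 ≤ n)
    (U_M U_N : Matrix (Fin d) (Fin d) ℂ)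
    (hM : U_M ∈ Matrix.unitaryGroup (Fin d) ℂ)
    (hN : U_N ∈ Matrix.unitaryGroup (Fin d) ℂ)
    (U : Matrix (Fin d) (Fin d) ℂ) (hU : U = U_Mᴴ * U_N) :
    (∃ ξ' : (Fin n → Fin d) × (Fin n → Fin d) → ℂ,
        star ξ' ⬝ᵥ ξ' = 1 ∧
        ∀ i : Fin n → Fin d,
          star ξ' ⬝ᵥ
            ((vecMulVec ((kronPow U_N n).mulVec (fun j => if j = i then (1 : ℂ) else 0))
                  (star ((kronPow U_M n).mulVec (fun j => if j = i then (1 : ℂ) else 0)))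
                ⊗ₖ (1 : Matrix (Fin n → Fin d) (Fin n → Fin d) ℂ)).mulVec ξ') = 0)
      ↔ (∃ ρ : Matrix (Fin n → Fin d) (Fin n → Fin d) ℂ,
          ρ.PosSemidef ∧ ρ.trace = 1 ∧
          ∀ i : Fin n → Fin d, (ρ * kronPow U n) i i = 0) := by
  have hM1 : U_Mᴴ * U_M = 1 := by
    have := Matrix.mem_unitaryGroup_iff'.mp hM
    rwa [Matrix.star_eq_conjTranspose] at this
  have hM2 : U_M * U_Mᴴ = 1 := by
    have := Matrix.mem_unitaryGroup_iff.mp hM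
    rwa [Matrix.star_eq_conjTranspose] at this
  have hWMM : (kronPow U_M n)ᴴ * kronPow U_M n = 1 := by
    rw [← kronPow_conjTranspose, ← kronPow_mul, hM1, kronPow_one]
  have hWMM' : kronPow U_M n * (kronPow U_M n)ᴴ = 1 := by
    rw [← kronPow_conjTranspose, ← kronPow_mul, hM2, kronPow_one]
  have hWU : kronPow U n = (kronPow U_M n)ᴴ * kronPow U_N n := by
    rw [hU, kronPow_mul, kronPow_conjTranspose]
  constructor
  · rintro ⟨ξ', hnorm, hcond⟩
    set y : (Fin n → Fin d) → (Fin n → Fin d) → ℂ :=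
      fun b => (kronPow U_M n)ᴴ.mulVec (fun a => ξ' (a, b)) with hy
    have hvb : ∀ b, (kronPow U_M n).mulVec (y b) = fun a => ξ' (a, b) := by
      intro b
      show kronPow U_M n *ᵥ ((kronPow U_M n)ᴴ *ᵥ _) = _
      rw [mulVec_mulVec, hWMM', one_mulVec]
    refine ⟨(Matrix.of fun b k => star (y b k))ᴴ * Matrix.of (fun b k => star (y b k)),
      Matrix.posSemidef_conjTranspose_mul_self _, ?_, ?_⟩
    · have ht := trace_eq (kronPow U_M n) hWMM y
      simp only [hvb, Prod.mk.eta] at ht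
      rw [← ht]
      exact hnorm
    · intro i
      rw [hWU]
      have hS := (key_identity (kronPow U_M n) (kronPow U_N n) ξ' i).symm.trans (hcond i)
      have hdq := diag_eq (kronPow U_M n) (kronPow U_N n) hWMM y i
      simp only [hvb] at hdq
      rw [← hdq]
      exact hS
  · rintro ⟨ρ, hPSD, htr, hdiag⟩
    obtain ⟨B, hB⟩ : ∃ B : Matrix (Fin n → Fin d) (Fin n → Fin d) ℂ, ρ = Bᴴ * B := by
      open scoped MatrixOrder Matrix.Norms.L2Operator in
      exact CStarAlgebra.nonneg_iff_eq_star_mul_self.mp hPSD.nonneg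
    set y : (Fin n → Fin d) → (Fin n → Fin d) → ℂ := fun b k => star (B b k) with hy
    have hBy : Matrix.of (fun b k => star (y b k)) = B := by
      ext b k; simp [hy]
    refine ⟨fun p => ((kronPow U_M n).mulVec (y p.2)) p.1, ?_, ?_⟩
    · rw [trace_eq (kronPow U_M n) hWMM y, hBy, ← hB, htr]
    · intro i
      rw [key_identity]
      have h0 : ((Matrix.of fun b k => star (y b k))ᴴ * Matrix.of (fun b k => star (y b k))
          * ((kronPow U_M n)ᴴ * kronPow U_N n)) i i = 0 := by
        rw [hBy, ← hB, ← hWU]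
        exact hdiag i
      exact (diag_eq (kronPow U_M n) (kronPow U_N n) hWMM y i).trans h0
end

section
/- Let r ≥ 1 and let A, B be r×r complex matrices with Aᴴ·A + Bᴴ·B = 1 (the identity matrix) and ‖A‖ < 1, where ‖·‖ is the l2 operator norm. Then B is invertible and ‖(Bᴴ)⁻¹ · Aᴴ · A* · (B*)⁻¹‖ ≤ ‖A‖² / (1 − ‖A‖²), where X* denotes the entrywise complex conjugate of X. -/
set_option maxHeartbeats 1000000


open Matrix

/-- The l2 (spectral) operator norm of a square complex matrix. -/
noncomputable def l2OpNorm {n : Type*} [Fintype n] [DecidableEq n]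
    (M : Matrix n n ℂ) : ℝ :=
  ‖Matrix.toEuclideanCLM (𝕜 := ℂ) M‖

open scoped Matrix.Norms.L2Operator

lemma l2OpNorm_eq {n : Type*} [Fintype n] [DecidableEq n] (M : Matrix n n ℂ) :
    l2OpNorm M = ‖M‖ := rfl

lemma mulVec_map_conj {n : Type*} [Fintype n] (M : Matrix n n ℂ) (v : n → ℂ) :
    (M.map (starRingEnd ℂ)) *ᵥ v
      = fun i => (starRingEnd ℂ) ((M *ᵥ fun j => (starRingEnd ℂ) (v j)) i) := by
  funext i
  simp [Matrix.mulVec, dotProduct, map_sum]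

lemma l2OpNorm_map_conj_le {n : Type*} [Fintype n] [DecidableEq n] (M : Matrix n n ℂ) :
    ‖M.map (starRingEnd ℂ)‖ ≤ ‖M‖ := by
  have key : ∀ (w : n → ℂ),
      ‖(WithLp.equiv 2 (n → ℂ)).symm (fun i => (starRingEnd ℂ) (w i))‖
        = ‖(WithLp.equiv 2 (n → ℂ)).symm w‖ := by
    intro w
    rw [EuclideanSpace.norm_eq, EuclideanSpace.norm_eq]
    simp
  rw [Matrix.cstar_norm_def, Matrix.cstar_norm_def]
  refine ContinuousLinearMap.opNorm_le_bound _ (norm_nonneg _) (fun x => ?_)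
  set v : n → ℂ := WithLp.equiv 2 (n → ℂ) x with hv
  have hx : x = (WithLp.equiv 2 (n → ℂ)).symm v := by simp [hv]
  rw [hx]
  change ‖(WithLp.equiv 2 (n → ℂ)).symm (M.map (starRingEnd ℂ) *ᵥ v)‖ ≤ _
  rw [mulVec_map_conj, key]
  calc ‖(WithLp.equiv 2 (n → ℂ)).symm (M *ᵥ fun j => (starRingEnd ℂ) (v j))‖
      ≤ ‖toEuclideanCLM (𝕜 := ℂ) M‖
          * ‖(WithLp.equiv 2 (n → ℂ)).symm (fun j => (starRingEnd ℂ) (v j))‖ := by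
        have := (toEuclideanCLM (𝕜 := ℂ) M).le_opNorm
          ((WithLp.equiv 2 (n → ℂ)).symm (fun j => (starRingEnd ℂ) (v j)))
        change ‖(WithLp.equiv 2 (n → ℂ)).symm (M *ᵥ fun j => (starRingEnd ℂ) (v j))‖ ≤ _ at this
        exact this
    _ = ‖toEuclideanCLM (𝕜 := ℂ) M‖ * ‖(WithLp.equiv 2 (n → ℂ)).symm v‖ := by rw [key]

lemma l2OpNorm_map_conj {n : Type*} [Fintype n] [DecidableEq n] (M : Matrix n n ℂ) :
    ‖M.map (starRingEnd ℂ)‖ = ‖M‖ := by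
  refine le_antisymm (l2OpNorm_map_conj_le M) ?_
  have : (M.map (starRingEnd ℂ)).map (starRingEnd ℂ) = M := by
    ext i j; simp
  conv_lhs => rw [← this]
  exact l2OpNorm_map_conj_le _

lemma l2OpNorm_transpose {n : Type*} [Fintype n] [DecidableEq n] (M : Matrix n n ℂ) :
    ‖Mᵀ‖ = ‖M‖ := by
  have : Mᵀ = (M.map (starRingEnd ℂ))ᴴ := by
    ext i j; simp
  rw [this, Matrix.l2_opNorm_conjTranspose, l2OpNorm_map_conj]

/-- The key norm estimate in the proof of the paper's Lemma 1: if
`Aᴴ A + Bᴴ B = 1` and `‖A‖ < 1`, then `B` is invertible and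
`‖(Bᴴ)⁻¹ Aᴴ A* (B*)⁻¹‖ ≤ ‖A‖² / (1 − ‖A‖²)`. -/
theorem separation_unitary_block_norm_bound
    (r : ℕ) (hr : 1 ≤ r)
    (A B : Matrix (Fin r) (Fin r) ℂ)
    (h : Aᴴ * A + Bᴴ * B = 1)
    (hA : l2OpNorm A < 1) :
    IsUnit B ∧
    l2OpNorm ((Bᴴ)⁻¹ * Aᴴ * A.map (starRingEnd ℂ) * (B.map (starRingEnd ℂ))⁻¹)
      ≤ l2OpNorm A ^ 2 / (1 - l2OpNorm A ^ 2) := by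
  rw [l2OpNorm_eq] at hA ⊢
  rw [l2OpNorm_eq]
  haveI : CompleteSpace (Matrix (Fin r) (Fin r) ℂ) :=
    FiniteDimensional.complete ℂ _
  haveI : Inhabited (Fin r) := ⟨⟨0, hr⟩⟩
  haveI : Nontrivial (EuclideanSpace ℂ (Fin r)) :=
    (WithLp.equiv 2 (Fin r → ℂ)).nontrivial
  set a : ℝ := ‖A‖ with ha
  have ha0 : 0 ≤ a := norm_nonneg _
  have hAA : ‖Aᴴ * A‖ = a ^ 2 := by
    rw [Matrix.l2_opNorm_conjTranspose_mul_self, sq]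
  have ha2 : a ^ 2 < 1 := by nlinarith
  have hlt : ‖Aᴴ * A‖ < 1 := by rw [hAA]; exact ha2
  have hpos : 0 < 1 - a ^ 2 := by linarith
  have hBB : Bᴴ * B = 1 - Aᴴ * A := eq_sub_of_add_eq' h
  have hu : IsUnit (Bᴴ * B) := by
    rw [hBB]; exact isUnit_one_sub_of_norm_lt_one hlt
  have hB : IsUnit B := by
    rw [Matrix.isUnit_iff_isUnit_det]
    rw [Matrix.isUnit_iff_isUnit_det, Matrix.det_mul] at hu
    exact isUnit_of_mul_isUnit_right hu
  refine ⟨hB, ?_⟩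
  -- norm of identity matrix
  have hone : ‖(1 : Matrix (Fin r) (Fin r) ℂ)‖ = 1 := by
    rw [Matrix.cstar_norm_def, _root_.map_one]
    exact ContinuousLinearMap.norm_id
  -- bound on `(Bᴴ * B)⁻¹`
  have hinv : ‖(Bᴴ * B)⁻¹‖ ≤ (1 - a ^ 2)⁻¹ := by
    rw [hBB, Matrix.nonsing_inv_eq_ringInverse, ← geom_series_eq_inverse _ hlt]
    have := tsum_geometric_le_of_norm_lt_one (Aᴴ * A) hlt
    rw [hone, hAA] at this
    linarith
  -- bound on `B⁻¹`
  have hBinv : ‖B⁻¹‖ * ‖B⁻¹‖ ≤ (1 - a ^ 2)⁻¹ := by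
    have hs : B⁻¹ * (B⁻¹)ᴴ = (Bᴴ * B)⁻¹ := by
      rw [Matrix.mul_inv_rev, Matrix.conjTranspose_nonsing_inv]
    have := CStarRing.norm_self_mul_star (x := B⁻¹)
    rw [Matrix.star_eq_conjTranspose, hs] at this
    rw [← this]
    exact hinv
  have hBinv0 : 0 ≤ ‖B⁻¹‖ := norm_nonneg _
  -- norms of the factors
  have e1 : ‖(Bᴴ)⁻¹‖ = ‖B⁻¹‖ := by
    rw [← Matrix.conjTranspose_nonsing_inv, Matrix.l2_opNorm_conjTranspose]
  have e2 : ‖Aᴴ‖ = a := Matrix.l2_opNorm_conjTranspose A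
  have e3 : ‖A.map (starRingEnd ℂ)‖ = a := l2OpNorm_map_conj A
  have e4 : ‖(B.map (starRingEnd ℂ))⁻¹‖ = ‖B⁻¹‖ := by
    have hm : B.map (starRingEnd ℂ) = (Bᴴ)ᵀ := by
      ext i j; simp
    rw [hm, ← Matrix.transpose_nonsing_inv, l2OpNorm_transpose,
      ← Matrix.conjTranspose_nonsing_inv, Matrix.l2_opNorm_conjTranspose]
  -- put everything together
  have hmul : ‖(Bᴴ)⁻¹ * Aᴴ * A.map (starRingEnd ℂ) * (B.map (starRingEnd ℂ))⁻¹‖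
      ≤ ‖B⁻¹‖ * a * a * ‖B⁻¹‖ := by
    calc ‖(Bᴴ)⁻¹ * Aᴴ * A.map (starRingEnd ℂ) * (B.map (starRingEnd ℂ))⁻¹‖
        ≤ ‖(Bᴴ)⁻¹ * Aᴴ * A.map (starRingEnd ℂ)‖ * ‖(B.map (starRingEnd ℂ))⁻¹‖ :=
          Matrix.l2_opNorm_mul _ _
      _ ≤ ‖(Bᴴ)⁻¹ * Aᴴ‖ * ‖A.map (starRingEnd ℂ)‖ * ‖(B.map (starRingEnd ℂ))⁻¹‖ :=
          mul_le_mul_of_nonneg_right (Matrix.l2_opNorm_mul _ _) (norm_nonneg _)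
      _ ≤ ‖(Bᴴ)⁻¹‖ * ‖Aᴴ‖ * ‖A.map (starRingEnd ℂ)‖ * ‖(B.map (starRingEnd ℂ))⁻¹‖ :=
          mul_le_mul_of_nonneg_right
            (mul_le_mul_of_nonneg_right (Matrix.l2_opNorm_mul _ _) (norm_nonneg _))
            (norm_nonneg _)
      _ = ‖B⁻¹‖ * a * a * ‖B⁻¹‖ := by rw [e1, e2, e3, e4]
  have : ‖B⁻¹‖ * a * a * ‖B⁻¹‖ ≤ a ^ 2 / (1 - a ^ 2) := by
    rw [div_eq_mul_inv]
    calc ‖B⁻¹‖ * a * a * ‖B⁻¹‖ = a ^ 2 * (‖B⁻¹‖ * ‖B⁻¹‖) := by ring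
      _ ≤ a ^ 2 * (1 - a ^ 2)⁻¹ := by
          exact mul_le_mul_of_nonneg_left hBinv (by positivity)
  linarith
end

section
/- Let θ ∈ ℝ, n ≥ 1, write a = cos(θ/2), b = sin(θ/2), and let U(θ) be the 2×2 complex matrix with rows (a, b) and (b, −a). Let G_n ∈ ℂ^(Fin n → Fin 2) be the vector with (G_n)_i = (−1)^{w(i)/2}/√(2^{n−1}) if w(i) is even and (G_n)_i = 0 otherwise. Then for every i : Fin n → Fin 2, the i-th diagonal entry of (G_n · G_nᴴ) · U(θ)^{⊗n}, namely (G_n)_i · ∑_j conj((G_n)_j) · (U(θ)^{⊗n})_{j,i}, equals cos(nθ/2)/2^{n−1} if w(i) is even, and 0 if w(i) is odd. In particular, if θ = (2k+1)π/n for some integer k, every diagonal entry of (G_n · G_nᴴ) · U(θ)^{⊗n} is zero. -/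
open Matrix Finset Real

/-- Hamming weight of a bit string. -/
def hW {n : ℕ} (i : Fin n → Fin 2) : ℕ :=
  (Finset.univ.filter fun k => i k = 1).card

lemma hW_eq_sum {n : ℕ} (j : Fin n → Fin 2) : hW j = ∑ k, (j k).val := by
  unfold hW
  rw [Finset.card_filter]
  refine Finset.sum_congr rfl fun k _ => ?_
  have h : ∀ x : Fin 2, (if x = 1 then 1 else 0) = x.val := by decide
  exact h (j k)

/-- **Eq. (2) of the paper and its corollary.** With `G_n` the GHZ-type state supported on
even-weight strings, the `i`-th diagonal entry of `|G_n⟩⟨G_n| U(θ)^{⊗n}` equals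
`cos(nθ/2)/2^{n−1}` when `w(i)` is even and `0` otherwise; in particular every diagonal
entry vanishes when `θ = (2k+1)π/n`. -/
theorem ghz_diag_eq_cos
    (θ : ℝ) (n : ℕ) (hn : 1 ≤ n)
    (U : Matrix (Fin 2) (Fin 2) ℂ)
    (hU : U = !![(Real.cos (θ / 2) : ℂ), (Real.sin (θ / 2) : ℂ);
                 (Real.sin (θ / 2) : ℂ), (-Real.cos (θ / 2) : ℂ)])
    (G : (Fin n → Fin 2) → ℂ)
    (hG : G = fun i => if Even (hW i) then
        (-1 : ℂ) ^ (hW i / 2) / (Real.sqrt (2 ^ (n - 1)) : ℂ) else 0) :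
    (∀ i : Fin n → Fin 2,
        G i * (∑ j, (starRingEnd ℂ) (G j) * kronPow U n j i)
          = if Even (hW i) then ((Real.cos (n * θ / 2) / 2 ^ (n - 1) : ℝ) : ℂ) else 0)
    ∧ (∀ k : ℤ, θ = (2 * k + 1) * Real.pi / n →
        ∀ i : Fin n → Fin 2,
          G i * (∑ j, (starRingEnd ℂ) (G j) * kronPow U n j i) = 0) := by
  have hrpos : (0:ℝ) < 2 ^ (n-1) := by positivity
  set r : ℝ := Real.sqrt (2 ^ (n-1)) with hrdef
  have hrpos' : (0:ℝ) < r := Real.sqrt_pos.mpr hrpos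
  have hr2 : (r:ℂ) * (r:ℂ) = ((2:ℂ))^(n-1) := by
    rw [← Complex.ofReal_mul, Real.mul_self_sqrt hrpos.le]
    push_cast; ring
  have hfin2 : ∀ v : Fin 2, v = 0 ∨ v = 1 := by decide
  -- conjugate of G in uniform form
  have hGconj : ∀ j : Fin n → Fin 2, (starRingEnd ℂ) (G j)
      = (Complex.I ^ hW j + (-Complex.I) ^ hW j) / (2 * r) := by
    intro j
    by_cases h : Even (hW j)
    · obtain ⟨m, hm⟩ := h
      have h2m : hW j = 2 * m := by omega
      have hdiv : hW j / 2 = m := by omega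
      have hI : Complex.I ^ hW j = (-1 : ℂ) ^ m := by
        rw [h2m, pow_mul, Complex.I_sq]
      have hI' : (-Complex.I) ^ hW j = (-1 : ℂ) ^ m := by
        rw [h2m, pow_mul]
        norm_num [Complex.I_sq]
      rw [hG]
      simp only []
      split_ifs with hc
      · rw [hdiv, map_div₀, map_pow, map_neg, _root_.map_one, Complex.conj_ofReal, hI, hI']
        ring
      · exact absurd ⟨m, hm⟩ hc
    · have hodd : Odd (hW j) := Nat.not_even_iff_odd.mp h
      have hneg : (-Complex.I) ^ hW j = -(Complex.I ^ hW j) := hodd.neg_pow Complex.I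
      rw [hG]
      simp only []
      split_ifs
      rw [map_zero, hneg]; ring
  -- the factorized sum
  have hfac : ∀ (i : Fin n → Fin 2) (z w e : ℂ),
      (U 0 0 + z * U 1 0 = e) → (U 0 1 + z * U 1 1 = w * e) →
      (∑ j : Fin n → Fin 2, z ^ hW j * ∏ k, U (j k) (i k)) = w ^ hW i * e ^ n := by
    intro i z w e h0 h1
    have step : ∀ j : Fin n → Fin 2, z ^ hW j * ∏ k, U (j k) (i k)
        = ∏ k, z ^ (j k).val * U (j k) (i k) := by
      intro j
      rw [Finset.prod_mul_distrib, Finset.prod_pow_eq_pow_sum, ← hW_eq_sum]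
    simp_rw [step]
    rw [← Fintype.prod_sum (fun k (v : Fin 2) => z ^ (v : Fin 2).val * U v (i k))]
    have factor : ∀ k : Fin n, (∑ v : Fin 2, z ^ (v : Fin 2).val * U v (i k))
        = w ^ (i k).val * e := by
      intro k
      rw [Fin.sum_univ_two]
      rcases hfin2 (i k) with h | h <;> rw [h] <;>
        simp only [Fin.val_zero, Fin.val_one, pow_zero, pow_one, one_mul]
      · exact h0
      · exact h1
    rw [Finset.prod_congr rfl fun k _ => factor k, Finset.prod_mul_distrib,
      Finset.prod_pow_eq_pow_sum, ← hW_eq_sum, Finset.prod_const, Finset.card_univ,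
      Fintype.card_fin]
  -- exponential values
  set e₁ : ℂ := Complex.exp ((θ/2 : ℝ) * Complex.I) with he₁
  set e₂ : ℂ := Complex.exp (-(θ/2 : ℝ) * Complex.I) with he₂
  have hU00 : U 0 0 = (Real.cos (θ/2) : ℂ) := by rw [hU]; simp
  have hU01 : U 0 1 = (Real.sin (θ/2) : ℂ) := by rw [hU]; simp
  have hU10 : U 1 0 = (Real.sin (θ/2) : ℂ) := by rw [hU]; simp
  have hU11 : U 1 1 = (-Real.cos (θ/2) : ℂ) := by rw [hU]; simp
  have he₁' : e₁ = (Real.cos (θ/2) : ℂ) + (Real.sin (θ/2) : ℂ) * Complex.I := by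
    rw [he₁, Complex.exp_mul_I, ← Complex.ofReal_cos, ← Complex.ofReal_sin]
  have he₂' : e₂ = (Real.cos (θ/2) : ℂ) - (Real.sin (θ/2) : ℂ) * Complex.I := by
    rw [he₂, ← Complex.ofReal_neg, Complex.exp_mul_I, ← Complex.ofReal_cos,
      ← Complex.ofReal_sin, Real.cos_neg, Real.sin_neg]
    push_cast; ring
  have hsum1 : ∀ i : Fin n → Fin 2,
      (∑ j : Fin n → Fin 2, Complex.I ^ hW j * ∏ k, U (j k) (i k))
        = (-Complex.I) ^ hW i * e₁ ^ n := by
    intro i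
    refine hfac i Complex.I (-Complex.I) e₁ ?_ ?_
    · rw [hU00, hU10, he₁']; ring
    · rw [hU01, hU11, he₁']
      linear_combination ((Real.sin (θ/2) : ℂ)) * Complex.I_sq
  have hsum2 : ∀ i : Fin n → Fin 2,
      (∑ j : Fin n → Fin 2, (-Complex.I) ^ hW j * ∏ k, U (j k) (i k))
        = Complex.I ^ hW i * e₂ ^ n := by
    intro i
    refine hfac i (-Complex.I) Complex.I e₂ ?_ ?_
    · rw [hU00, hU10, he₂']
      ring
    · rw [hU01, hU11, he₂']
      linear_combination ((Real.sin (θ/2) : ℂ)) * Complex.I_sq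
  -- powers of exponentials
  have hE1 : e₁ ^ n = Complex.exp ((n * θ / 2 : ℝ) * Complex.I) := by
    rw [he₁, ← Complex.exp_nat_mul]
    congr 1
    push_cast; ring
  have hE2 : e₂ ^ n = Complex.exp (-(n * θ / 2 : ℝ) * Complex.I) := by
    rw [he₂, ← Complex.exp_nat_mul]
    congr 1
    push_cast; ring
  have hcos : Complex.exp ((n * θ / 2 : ℝ) * Complex.I)
      + Complex.exp (-(n * θ / 2 : ℝ) * Complex.I)
      = 2 * (Real.cos (n * θ / 2) : ℂ) := by
    rw [← Complex.two_cos, ← Complex.ofReal_cos]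
  -- the sum, computed
  have hS : ∀ i : Fin n → Fin 2,
      (∑ j, (starRingEnd ℂ) (G j) * kronPow U n j i)
        = ((-Complex.I) ^ hW i * e₁ ^ n + Complex.I ^ hW i * e₂ ^ n) / (2 * r) := by
    intro i
    have : ∀ j : Fin n → Fin 2, (starRingEnd ℂ) (G j) * kronPow U n j i
        = (Complex.I ^ hW j * ∏ k, U (j k) (i k)
          + (-Complex.I) ^ hW j * ∏ k, U (j k) (i k)) / (2 * r) := by
      intro j
      rw [hGconj j]
      unfold kronPow
      ring
    rw [Finset.sum_congr rfl fun j _ => this j, ← Finset.sum_div,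
      Finset.sum_add_distrib, hsum1 i, hsum2 i]
  -- main clause
  have main : ∀ i : Fin n → Fin 2,
      G i * (∑ j, (starRingEnd ℂ) (G j) * kronPow U n j i)
        = if Even (hW i) then ((Real.cos (n * θ / 2) / 2 ^ (n - 1) : ℝ) : ℂ) else 0 := by
    intro i
    by_cases h : Even (hW i)
    · obtain ⟨m, hm⟩ := h
      have h2m : hW i = 2 * m := by omega
      have hdiv : hW i / 2 = m := by omega
      have hI : Complex.I ^ hW i = (-1 : ℂ) ^ m := by
        rw [h2m, pow_mul, Complex.I_sq]
      have hI' : (-Complex.I) ^ hW i = (-1 : ℂ) ^ m := by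
        rw [h2m, pow_mul]
        norm_num [Complex.I_sq]
      have hmm : ((-1:ℂ)^m) * ((-1:ℂ)^m) = 1 := by
        rw [← pow_add]
        exact (Even.add_self m).neg_one_pow
      rw [hS i, hI, hI', hE1, hE2, hG]
      simp only []
      split_ifs with hc
      case neg => exact absurd ⟨m, hm⟩ hc
      rw [hdiv]
      set E : ℂ := Complex.exp ((n * θ / 2 : ℝ) * Complex.I)
      set E' : ℂ := Complex.exp (-(n * θ / 2 : ℝ) * Complex.I)
      calc ((-1:ℂ)^m / (r:ℂ)) * (((-1:ℂ)^m * E + (-1:ℂ)^m * E') / (2 * r))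
          = ((-1:ℂ)^m * ((-1:ℂ)^m)) * ((E + E') / (2 * ((r:ℂ) * r))) := by ring
        _ = (E + E') / (2 * ((r:ℂ) * r)) := by rw [hmm, one_mul]
        _ = (2 * (Real.cos (n * θ / 2) : ℂ)) / (2 * (2:ℂ)^(n-1)) := by rw [hcos, hr2]
        _ = (Real.cos (n * θ / 2) : ℂ) / (2:ℂ)^(n-1) := by
            rw [mul_div_mul_left _ _ (two_ne_zero)]
        _ = _ := by push_cast; ring
    · rw [hG]
      simp only []
      split_ifs
      rw [zero_mul]
  refine ⟨main, ?_⟩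
  intro k hθ i
  have hn0 : (n:ℝ) ≠ 0 := by positivity
  have hcz : Real.cos (n * θ / 2) = 0 := by
    rw [Real.cos_eq_zero_iff]
    exact ⟨k, by rw [hθ]; field_simp⟩
  rw [main i]
  split_ifs with hc
  · rw [hcz]; simp
  · rfl
end

section
/- Let θ ∈ [0, π], write a = cos(θ/2), b = sin(θ/2). Let P₀ = e₀·e₀ᴴ, P₁ = e₁·e₁ᴴ be the standard rank-one projectors on ℂ², and let Q₀ = ψ₀·ψ₀ᴴ, Q₁ = ψ₁·ψ₁ᴴ where ψ₀ = (a, b) and ψ₁ = (b, −a). Then cos(θ/2) is the least element of the set { √(Re(tr(ρ·P₀))·Re(tr(ρ·Q₀))) + √(Re(tr(ρ·P₁))·Re(tr(ρ·Q₁))) : ρ a 2×2 positive semidefinite complex matrix with trace 1 }; that is, every element of this set is ≥ cos(θ/2) and the value cos(θ/2) is attained by some density matrix ρ. -/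
open Matrix Real
open scoped ComplexOrder

private lemma outer_posSemidef (v : Fin 2 → ℂ) : (vecMulVec v (star v)).PosSemidef := by
  refine PosSemidef.of_dotProduct_mulVec_nonneg ?_ ?_
  · ext i j
    simp [vecMulVec_apply, conjTranspose_apply, mul_comm]
  · intro x
    have h : star x ⬝ᵥ (vecMulVec v (star v)) *ᵥ x
        = star (star x ⬝ᵥ v) * (star x ⬝ᵥ v) := by
      simp [dotProduct, mulVec, vecMulVec_apply, Fin.sum_univ_two, star_add, StarMul.star_mul]
      ring
    rw [h]
    exact star_mul_self_nonneg _

private lemma trace_formula (ρ : Matrix (Fin 2) (Fin 2) ℂ) (u0 u1 : ℝ) :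
    (ρ * vecMulVec ![(u0:ℂ),(u1:ℂ)] (star ![(u0:ℂ),(u1:ℂ)])).trace.re
      = u0^2 * (ρ 0 0).re + u0*u1*(ρ 0 1).re + u0*u1*(ρ 1 0).re + u1^2 * (ρ 1 1).re := by
  simp [Matrix.trace, Matrix.mul_apply, Fin.sum_univ_two, vecMulVec_apply, Matrix.diag, -cons_vecMulVec,
    Complex.add_re, Complex.mul_re, Complex.conj_ofReal]
  ring

/-- **Minimal fidelity of qubit observables.** For `S = σ_z` and `T` at Bloch angle `θ`,
the minimum over density matrices `ρ` of the outcome-distribution fidelity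
`∑_m √(tr(ρP_m) tr(ρQ_m))` equals `cos(θ/2)`. -/
theorem fidelity_min_qubit_observables
    (θ : ℝ) (hθ : θ ∈ Set.Icc 0 Real.pi)
    (a b : ℝ) (ha : a = Real.cos (θ / 2)) (hb : b = Real.sin (θ / 2))
    (P₀ P₁ Q₀ Q₁ : Matrix (Fin 2) (Fin 2) ℂ)
    (hP₀ : P₀ = vecMulVec ![1, 0] (star ![1, 0]))
    (hP₁ : P₁ = vecMulVec ![0, 1] (star ![0, 1]))
    (hQ₀ : Q₀ = vecMulVec ![(a : ℂ), (b : ℂ)] (star ![(a : ℂ), (b : ℂ)]))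
    (hQ₁ : Q₁ = vecMulVec ![(b : ℂ), (-a : ℂ)] (star ![(b : ℂ), (-a : ℂ)])) :
    IsLeast
      { x : ℝ | ∃ ρ : Matrix (Fin 2) (Fin 2) ℂ, ρ.PosSemidef ∧ ρ.trace = 1 ∧
          x = Real.sqrt ((ρ * P₀).trace.re * (ρ * Q₀).trace.re)
            + Real.sqrt ((ρ * P₁).trace.re * (ρ * Q₁).trace.re) }
      (Real.cos (θ / 2)) := by
  obtain ⟨hθ0, hθπ⟩ := hθ
  have ha0 : 0 ≤ a := by
    rw [ha]; exact Real.cos_nonneg_of_mem_Icc ⟨by linarith, by linarith⟩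
  have hb0 : 0 ≤ b := by
    rw [hb]; exact Real.sin_nonneg_of_nonneg_of_le_pi (by linarith) (by linarith)
  have hab : a ^ 2 + b ^ 2 = 1 := by
    rw [ha, hb]; exact Real.cos_sq_add_sin_sq _
  -- recast the fixed vectors with real-coefficient entries
  have hP₀' : P₀ = vecMulVec ![((1:ℝ):ℂ), ((0:ℝ):ℂ)] (star ![((1:ℝ):ℂ), ((0:ℝ):ℂ)]) := by
    rw [hP₀]; norm_num [-cons_vecMulVec]
  have hP₁' : P₁ = vecMulVec ![((0:ℝ):ℂ), ((1:ℝ):ℂ)] (star ![((0:ℝ):ℂ), ((1:ℝ):ℂ)]) := by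
    rw [hP₁]; norm_num [-cons_vecMulVec]
  have hQ₁' : Q₁ = vecMulVec ![((b:ℝ):ℂ), ((-a:ℝ):ℂ)] (star ![((b:ℝ):ℂ), ((-a:ℝ):ℂ)]) := by
    rw [hQ₁]; norm_num [-cons_vecMulVec]
  rw [← ha]
  constructor
  · -- the value `a` is attained by `ρ = Q₁`
    refine ⟨Q₁, by rw [hQ₁]; exact outer_posSemidef _, ?_, ?_⟩
    · rw [hQ₁]
      simp [Matrix.trace, Matrix.diag, Fin.sum_univ_two, vecMulVec_apply, Complex.ext_iff,
        Complex.conj_ofReal]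
      nlinarith [hab]
    · have e00 : (Q₁ 0 0).re = b ^ 2 := by
        rw [hQ₁]; simp [vecMulVec_apply, Complex.mul_re, Complex.conj_ofReal]; try ring
      have e01 : (Q₁ 0 1).re = -(a*b) := by
        rw [hQ₁]; simp [vecMulVec_apply, Complex.mul_re, Complex.conj_ofReal]; try ring
      have e10 : (Q₁ 1 0).re = -(a*b) := by
        rw [hQ₁]; simp [vecMulVec_apply, Complex.mul_re, Complex.conj_ofReal]; try ring
      have e11 : (Q₁ 1 1).re = a ^ 2 := by
        rw [hQ₁]; simp [vecMulVec_apply, Complex.mul_re, Complex.conj_ofReal]; try ring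
      rw [hP₀', hP₁']
      rw [show Q₀ = vecMulVec ![((a:ℝ):ℂ), ((b:ℝ):ℂ)] (star ![((a:ℝ):ℂ), ((b:ℝ):ℂ)]) from hQ₀]
      nth_rewrite 5 [hQ₁']
      rw [trace_formula, trace_formula, trace_formula, trace_formula, e00, e01, e10, e11]
      have h1 : b ^ 2 * b ^ 2 + b * (-a) * (-(a*b)) + b * (-a) * (-(a*b)) + (-a) ^ 2 * a ^ 2
          = (a^2 + b^2)^2 := by ring
      have h2 : a ^ 2 * b ^ 2 + a * b * (-(a*b)) + a * b * (-(a*b)) + b ^ 2 * a ^ 2 = 0 := by ring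
      rw [h2]
      have : (1:ℝ) ^ 2 * b ^ 2 + 1 * 0 * (-(a * b)) + 1 * 0 * (-(a * b)) + 0 ^ 2 * a ^ 2 = b^2 := by
        ring
      rw [this]
      rw [show (0:ℝ) ^ 2 * b ^ 2 + 0 * 1 * (-(a * b)) + 0 * 1 * (-(a * b)) + 1 ^ 2 * a ^ 2 = a^2
        from by ring]
      rw [h1, hab]
      rw [mul_zero, Real.sqrt_zero, one_pow, mul_one, Real.sqrt_sq ha0]
      ring
  · -- lower bound
    rintro x ⟨ρ, hρ, htr, rfl⟩
    set r0 := (ρ 0 0).re with hr0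
    set r1 := (ρ 1 1).re with hr1
    set t := (ρ 0 1).re with htre
    have herm : ρ 1 0 = star (ρ 0 1) := by
      conv_lhs => rw [← hρ.1]
      simp [conjTranspose_apply]
    have ht' : (ρ 1 0).re = t := by rw [herm]; simp [htre]
    have hsum : r0 + r1 = 1 := by
      have := congrArg Complex.re htr
      simpa [Matrix.trace, Matrix.diag, Fin.sum_univ_two] using this
    -- quadratic form nonnegativity
    have hform : ∀ u v : ℝ, 0 ≤ r0 * (u*u) + (2*t) * (u*v) + r1 * (v*v) := by
      intro u v
      have h := hρ.dotProduct_mulVec_nonneg ![(u:ℂ), (v:ℂ)]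
      rw [Complex.nonneg_iff] at h
      have hre := h.1
      have : (star ![(u:ℂ), (v:ℂ)] ⬝ᵥ ρ *ᵥ ![(u:ℂ), (v:ℂ)]).re
          = r0 * (u*u) + t * (u*v) + (ρ 1 0).re * (u*v) + r1 * (v*v) := by
        simp [dotProduct, mulVec, Fin.sum_univ_two, Complex.add_re, Complex.mul_re,
          Complex.conj_ofReal, hr0, hr1, htre]
        ring
      rw [this, ht'] at hre
      linarith
    have hr0n : 0 ≤ r0 := by have := hform 1 0; linarith
    have hr1n : 0 ≤ r1 := by have := hform 0 1; linarith
    have ht2 : t ^ 2 ≤ r0 * r1 := by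
      have hd := discrim_le_zero (a := r0) (b := 2*t) (c := r1)
        (fun u => by have := hform u 1; linarith)
      rw [discrim] at hd
      nlinarith
    -- compute all four traces
    rw [hP₀', hP₁', hQ₁',
      show Q₀ = vecMulVec ![((a:ℝ):ℂ), ((b:ℝ):ℂ)] (star ![((a:ℝ):ℂ), ((b:ℝ):ℂ)]) from hQ₀,
      trace_formula, trace_formula, trace_formula, trace_formula, ht']
    rw [show (1:ℝ) ^ 2 * (ρ 0 0).re + 1 * 0 * (ρ 0 1).re + 1 * 0 * t + 0 ^ 2 * (ρ 1 1).re = r0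
      from by rw [← hr0, ← hr1]; ring]
    rw [show (0:ℝ) ^ 2 * (ρ 0 0).re + 0 * 1 * (ρ 0 1).re + 0 * 1 * t + 1 ^ 2 * (ρ 1 1).re = r1
      from by rw [← hr0, ← hr1]; ring]
    rw [show a ^ 2 * (ρ 0 0).re + a * b * (ρ 0 1).re + a * b * t + b ^ 2 * (ρ 1 1).re
        = a^2*r0 + 2*(a*b)*t + b^2*r1 from by rw [← hr0, ← hr1, ← htre]; ring]
    rw [show b ^ 2 * (ρ 0 0).re + b * -a * (ρ 0 1).re + b * -a * t + (-a) ^ 2 * (ρ 1 1).re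
        = b^2*r0 - 2*(a*b)*t + a^2*r1 from by rw [← hr0, ← hr1, ← htre]; ring]
    -- the key elementary inequality
    have h1 : a * r0 + b * t ≤ Real.sqrt (r0 * (a^2*r0 + 2*(a*b)*t + b^2*r1)) := by
      rcases le_or_gt (a * r0 + b * t) 0 with h | h
      · exact h.trans (Real.sqrt_nonneg _)
      · rw [show r0 * (a^2*r0 + 2*(a*b)*t + b^2*r1)
            = (a*r0 + b*t)^2 + b^2 * (r0*r1 - t^2) from by ring]
        calc a * r0 + b * t = Real.sqrt ((a*r0+b*t)^2) := (Real.sqrt_sq h.le).symm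
          _ ≤ _ := Real.sqrt_le_sqrt (by nlinarith [sq_nonneg b])
    have h2 : a * r1 - b * t ≤ Real.sqrt (r1 * (b^2*r0 - 2*(a*b)*t + a^2*r1)) := by
      rcases le_or_gt (a * r1 - b * t) 0 with h | h
      · exact h.trans (Real.sqrt_nonneg _)
      · rw [show r1 * (b^2*r0 - 2*(a*b)*t + a^2*r1)
            = (a*r1 - b*t)^2 + b^2 * (r0*r1 - t^2) from by ring]
        calc a * r1 - b * t = Real.sqrt ((a*r1-b*t)^2) := (Real.sqrt_sq h.le).symm
          _ ≤ _ := Real.sqrt_le_sqrt (by nlinarith [sq_nonneg b])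
    have : a = (a * r0 + b * t) + (a * r1 - b * t) := by
      rw [show (a * r0 + b * t) + (a * r1 - b * t) = a * (r0 + r1) from by ring, hsum, mul_one]
    linarith
end

section
/- Let n ≥ 1 and θ ∈ ℝ with sin²(θ/2) = 1/n, write a = cos(θ/2), b = sin(θ/2), and let U(θ) be the 2×2 complex matrix with rows (a, b) and (b, −a). Let W_n = { i : Fin n → Fin 2 | w(i) = 1 } be the set of bit strings of Hamming weight one. Then the principal submatrix of U(θ)^{⊗n} with rows and columns restricted to W_n has determinant 0. -/
open Matrix Finset Real

/-- **W-state example.** When `sin²(θ/2) = 1/n`, the principal submatrix of `U(θ)^{⊗n}`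
on the set of Hamming-weight-one strings is singular. -/
theorem wstate_submatrix_singular
    (n : ℕ) (hn : 1 ≤ n) (θ : ℝ) (hθ : Real.sin (θ / 2) ^ 2 = 1 / n)
    (U : Matrix (Fin 2) (Fin 2) ℂ)
    (hU : U = !![(Real.cos (θ / 2) : ℂ), (Real.sin (θ / 2) : ℂ);
                 (Real.sin (θ / 2) : ℂ), (-Real.cos (θ / 2) : ℂ)])
    (W : Finset (Fin n → Fin 2))
    (hW : W = Finset.univ.filter fun i => (Finset.univ.filter fun k => i k = 1).card = 1) :
    ((kronPow U n).submatrix (Subtype.val : W → (Fin n → Fin 2))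
        (Subtype.val : W → (Fin n → Fin 2))).det = 0 := by
  classical
  set a : ℂ := (Real.cos (θ / 2) : ℂ) with ha
  set b : ℂ := (Real.sin (θ / 2) : ℂ) with hb
  have hn0 : (n : ℂ) ≠ 0 := Nat.cast_ne_zero.mpr (by omega)
  have hb2 : b ^ 2 = 1 / (n : ℂ) := by
    rw [hb, ← Complex.ofReal_pow, hθ]; push_cast; ring
  have ha2 : a ^ 2 = 1 - 1 / (n : ℂ) := by
    rw [ha, ← Complex.ofReal_pow, Real.cos_sq', hθ]; push_cast; ring
  -- the basis vectors of weight one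
  set e : Fin n → (Fin n → Fin 2) := fun p k => if k = p then 1 else 0 with he
  have hfilter : ∀ p : Fin n, (Finset.univ.filter fun k => e p k = 1) = {p} := by
    intro p
    ext k
    simp only [mem_filter, mem_univ, true_and, mem_singleton, he]
    by_cases h : k = p <;> simp [h]
  have he_mem : ∀ p : Fin n, e p ∈ W := by
    intro p
    rw [hW]
    simp only [mem_filter, mem_univ, true_and, hfilter p, Finset.card_singleton]
  have he_inj : Function.Injective e := by
    intro p q hpq
    by_contra hne
    have h1 := congrFun hpq p
    simp [he, hne] at h1
  have hW_eq : W = Finset.image e Finset.univ := by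
    ext i
    simp only [Finset.mem_image, mem_univ, true_and]
    constructor
    · intro hi
      rw [hW, mem_filter] at hi
      obtain ⟨p, hp⟩ := Finset.card_eq_one.mp hi.2
      refine ⟨p, ?_⟩
      funext k
      have hk : i k = 1 ↔ k = p := by
        constructor
        · intro h
          have : k ∈ Finset.univ.filter fun k => i k = 1 := by simp [h]
          rw [hp] at this; simpa using this
        · intro h
          have : p ∈ ({p} : Finset (Fin n)) := Finset.mem_singleton_self p
          rw [← hp] at this
          simp only [mem_filter] at this
          rw [h]; exact this.2
      have h2 : ∀ x : Fin 2, x ≠ 1 → x = 0 := by decide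
      by_cases h : k = p
      · simp only [he, if_pos h]
        exact (hk.mpr h).symm
      · simp only [he]
        rw [if_neg h]
        exact (h2 _ (fun hc => h (hk.mp hc))).symm
    · rintro ⟨p, rfl⟩
      exact he_mem p
  -- entries of U
  have hent : ∀ q p k : Fin n,
      U (e q k) (e p k) =
        if k = q then (if k = p then -a else b) else (if k = p then b else a) := by
    intro q p k
    rw [hU]
    by_cases h1 : k = q <;> by_cases h2 : k = p
    · subst h1; subst h2; simp [he]
    · subst h1; simp [he, h2]
    · subst h2; simp [he, h1]
    · simp [he, h1, h2]
  -- the product over one row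
  have hprod : ∀ q p : Fin n,
      (∏ k, U (e q k) (e p k)) =
        if p = q then -a * a ^ (n - 1) else b * (b * a ^ (n - 2)) := by
    intro q p
    by_cases hpq : p = q
    · subst hpq
      rw [if_pos rfl]
      have : ∀ k : Fin n, U (e p k) (e p k) = if k = p then -a else a := by
        intro k; rw [hent]; by_cases h : k = p <;> simp [h]
      rw [Finset.prod_congr rfl fun k _ => this k, Finset.prod_ite]
      simp only [Finset.prod_const, Finset.filter_eq', mem_univ, if_pos, Finset.card_singleton,
        pow_one]
      congr 2
      rw [Finset.filter_ne', Finset.card_erase_of_mem (mem_univ p), Finset.card_univ,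
        Fintype.card_fin]
    · rw [if_neg hpq]
      have hq : q ∈ (Finset.univ : Finset (Fin n)) := mem_univ q
      rw [← Finset.mul_prod_erase Finset.univ _ hq, hent q p q, if_pos rfl,
        if_neg (fun h => hpq h.symm)]
      have hp' : p ∈ (Finset.univ.erase q) := Finset.mem_erase.mpr ⟨hpq, mem_univ p⟩
      rw [← Finset.mul_prod_erase _ _ hp', hent q p p]
      rw [if_neg (fun h : p = q => hpq h), if_pos rfl]
      congr 1
      congr 1
      have : ∀ k ∈ (Finset.univ.erase q).erase p, U (e q k) (e p k) = a := by
        intro k hk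
        rw [Finset.mem_erase, Finset.mem_erase] at hk
        rw [hent, if_neg hk.2.1, if_neg hk.1]
      rw [Finset.prod_congr rfl this, Finset.prod_const]
      congr 1
      rw [Finset.card_erase_of_mem hp', Finset.card_erase_of_mem (mem_univ q),
        Finset.card_univ, Fintype.card_fin]
      omega
  -- the determinant is zero since rows sum to zero
  rw [← Matrix.exists_mulVec_eq_zero_iff]
  refine ⟨fun _ => 1, ?_, ?_⟩
  · intro h0
    have := congrFun h0 ⟨e ⟨0, by omega⟩, he_mem _⟩
    simp at this
  · funext i
    obtain ⟨iv, hi⟩ := i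
    have : iv ∈ Finset.image e Finset.univ := by rwa [← hW_eq]
    obtain ⟨q, _, rfl⟩ := Finset.mem_image.mp this
    simp only [Matrix.mulVec, dotProduct, Matrix.submatrix_apply, mul_one, Pi.zero_apply]
    rw [Finset.sum_coe_sort W (fun j => kronPow U n (e q) j)]
    rw [hW_eq, Finset.sum_image (fun x _ y _ h => he_inj h)]
    simp only [kronPow]
    rw [Finset.sum_congr rfl fun p _ => hprod q p]
    rw [Finset.sum_ite]
    simp only [Finset.sum_const, Finset.filter_eq', mem_univ, if_pos, Finset.card_singleton,
      one_smul]
    rw [Finset.filter_ne', Finset.card_erase_of_mem (mem_univ q), Finset.card_univ,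
      Fintype.card_fin, nsmul_eq_mul]
    -- algebra
    rcases Nat.eq_or_lt_of_le hn with h1 | h2
    · -- n = 1
      have hn1 : n = 1 := h1.symm
      subst hn1
      have ha0 : a = 0 := by
        have : a ^ 2 = 0 := by rw [ha2]; norm_num
        exact pow_eq_zero_iff (by norm_num) |>.mp this
      simp [ha0]
    · -- n ≥ 2
      have h2' : 2 ≤ n := h2
      have hcast : ((n - 1 : ℕ) : ℂ) = (n : ℂ) - 1 := by
        push_cast [Nat.cast_sub (by omega : 1 ≤ n)]; ring
      have hpow : a ^ (n - 1) = a ^ (n - 2) * a := by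
        rw [← pow_succ]
        congr 1
        omega
      rw [hpow, hcast]
      have key : -(a ^ 2) + ((n : ℂ) - 1) * b ^ 2 = 0 := by
        rw [ha2, hb2]; field_simp; ring
      calc -a * (a ^ (n - 2) * a) + ((n : ℂ) - 1) * (b * (b * a ^ (n - 2)))
          = a ^ (n - 2) * (-(a ^ 2) + ((n : ℂ) - 1) * b ^ 2) := by ring
        _ = 0 := by rw [key, mul_zero]
end

section
/- Let θ ∈ (0, π], let n = ⌈π/θ⌉, write a = cos(θ/2), b = sin(θ/2), and let U(θ) be the 2×2 complex matrix with rows (a, b) and (b, −a). Then there exists a complex matrix ρ indexed by (Fin n → Fin 2) × (Fin n → Fin 2) that is positive semidefinite with trace 1 and such that every diagonal entry of ρ · U(θ)^{⊗n} is zero. -/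
open Matrix Real
open scoped ComplexOrder

namespace MMaux

open Complex

/-- qubit vector `(1, -σ i)`; for `σ = ±1` it satisfies `U x̄ = e^{±iθ/2} x`. -/
noncomputable def chiV (σ : ℝ) : Fin 2 → ℂ := ![1, -(σ : ℂ) * Complex.I]

/-- product vector with per-qubit pattern `g`. -/
noncomputable def pvec {n : ℕ} (g : Fin n → ℝ) : (Fin n → Fin 2) → ℂ :=
  fun i => ∏ k, chiV (g k) (i k)

/-- outer product `v v†`. -/
noncomputable def outerM {n : ℕ} (v : (Fin n → Fin 2) → ℂ) :
    Matrix (Fin n → Fin 2) (Fin n → Fin 2) ℂ :=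
  Matrix.of fun i j => v i * (starRingEnd ℂ) (v j)

lemma chi_mul_conj (σ : ℝ) (hσ : σ = 1 ∨ σ = -1) (b : Fin 2) :
    chiV σ b * (starRingEnd ℂ) (chiV σ b) = 1 := by
  rcases hσ with h | h <;> subst h <;> fin_cases b <;>
    simp [chiV, Complex.conj_I, mul_mul_mul_comm, Complex.I_mul_I]

lemma chi_sq (σ : ℝ) (hσ : σ = 1 ∨ σ = -1) (b : Fin 2) :
    chiV σ b * chiV σ b = ![(1 : ℂ), -1] b := by
  rcases hσ with h | h <;> subst h <;> fin_cases b <;>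
    simp [chiV, mul_mul_mul_comm, Complex.I_mul_I]

lemma pvec_mul_conj {n : ℕ} (g : Fin n → ℝ) (hg : ∀ k, g k = 1 ∨ g k = -1)
    (i : Fin n → Fin 2) : pvec g i * (starRingEnd ℂ) (pvec g i) = 1 := by
  rw [pvec, map_prod, ← Finset.prod_mul_distrib]
  exact Finset.prod_eq_one fun k _ => chi_mul_conj (g k) (hg k) (i k)

lemma pvec_sq {n : ℕ} (g : Fin n → ℝ) (hg : ∀ k, g k = 1 ∨ g k = -1)
    (i : Fin n → Fin 2) : pvec g i * pvec g i = ∏ k, (![(1 : ℂ), -1]) (i k) := by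
  rw [pvec, ← Finset.prod_mul_distrib]
  exact Finset.prod_congr rfl fun k _ => chi_sq (g k) (hg k) (i k)

lemma factor (θ : ℝ) (U : Matrix (Fin 2) (Fin 2) ℂ)
    (hU : U = !![(Real.cos (θ / 2) : ℂ), (Real.sin (θ / 2) : ℂ);
                 (Real.sin (θ / 2) : ℂ), (-Real.cos (θ / 2) : ℂ)])
    (σ : ℝ) (hσ : σ = 1 ∨ σ = -1) (c : Fin 2) :
    ∑ b : Fin 2, (starRingEnd ℂ) (chiV σ b) * U b c
      = Complex.exp ((σ * (θ / 2) : ℝ) * Complex.I) * chiV σ c := by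
  subst hU
  rw [Complex.exp_mul_I, ← Complex.ofReal_cos, ← Complex.ofReal_sin]
  rcases hσ with h | h <;> subst h <;> fin_cases c <;>
    simp [chiV, Fin.sum_univ_two, Complex.conj_I, Complex.conj_ofReal,
      Real.cos_neg, Real.sin_neg, one_mul, neg_mul] <;>
    ring_nf <;> simp [Complex.I_sq]

lemma rowsum (θ : ℝ) (U : Matrix (Fin 2) (Fin 2) ℂ)
    (hU : U = !![(Real.cos (θ / 2) : ℂ), (Real.sin (θ / 2) : ℂ);
                 (Real.sin (θ / 2) : ℂ), (-Real.cos (θ / 2) : ℂ)])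
    {n : ℕ} (g : Fin n → ℝ) (hg : ∀ k, g k = 1 ∨ g k = -1) (i : Fin n → Fin 2) :
    ∑ j, (starRingEnd ℂ) (pvec g j) * kronPow U n j i
      = Complex.exp (((∑ k, g k) * (θ / 2) : ℝ) * Complex.I) * pvec g i := by
  have h1 : ∀ j : Fin n → Fin 2, (starRingEnd ℂ) (pvec g j) * kronPow U n j i
      = ∏ k, ((starRingEnd ℂ) (chiV (g k) (j k)) * U (j k) (i k)) := by
    intro j
    rw [pvec, map_prod, kronPow, ← Finset.prod_mul_distrib]
  simp_rw [h1]
  rw [← Fintype.prod_sum (fun k b => (starRingEnd ℂ) (chiV (g k) b) * U b (i k))]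
  have h2 : ∀ k : Fin n, ∑ b : Fin 2, (starRingEnd ℂ) (chiV (g k) b) * U b (i k)
      = Complex.exp ((g k * (θ / 2) : ℝ) * Complex.I) * chiV (g k) (i k) :=
    fun k => factor θ U hU (g k) (hg k) (i k)
  rw [Finset.prod_congr rfl fun k _ => h2 k, Finset.prod_mul_distrib,
    ← Complex.exp_sum]
  congr 2
  push_cast
  rw [← Finset.sum_mul, ← Finset.sum_mul]

lemma exp_pair (x : ℝ) :
    Complex.exp ((x : ℝ) * Complex.I) + Complex.exp ((-x : ℝ) * Complex.I)
      = 2 * (Real.cos x : ℂ) := by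
  rw [Complex.exp_mul_I, Complex.exp_mul_I]
  push_cast
  rw [Complex.cos_neg, Complex.sin_neg, ← Complex.ofReal_cos]
  ring

lemma outer_quad {n : ℕ} (v x : (Fin n → Fin 2) → ℂ) :
    dotProduct (star x) ((outerM v) *ᵥ x)
      = (starRingEnd ℂ) (∑ j, (starRingEnd ℂ) (v j) * x j)
        * (∑ j, (starRingEnd ℂ) (v j) * x j) := by
  rw [map_sum, Finset.sum_mul]
  simp only [dotProduct, Matrix.mulVec, outerM, Matrix.of_apply, Pi.star_apply,
    Finset.mul_sum, _root_.map_mul, RingHomCompTriple.comp_apply, Complex.conj_conj,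
    RingHom.id_apply, Finset.sum_mul]
  refine Finset.sum_congr rfl fun a _ => Finset.sum_congr rfl fun b _ => by
    simp [mul_comm, mul_left_comm, RCLike.star_def]

lemma psd_sum {n : ℕ} (w : Fin 4 → ℝ) (hw : ∀ m, 0 ≤ w m)
    (v : Fin 4 → (Fin n → Fin 2) → ℂ) (x : (Fin n → Fin 2) → ℂ) :
    0 ≤ dotProduct (star x) ((∑ m : Fin 4, (w m : ℂ) • outerM (v m)) *ᵥ x) := by
  have h1 : (∑ m : Fin 4, (w m : ℂ) • outerM (v m)) *ᵥ x
      = ∑ m : Fin 4, (w m : ℂ) • (outerM (v m) *ᵥ x) := by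
    ext i
    simp only [Matrix.mulVec, dotProduct, Matrix.sum_apply, Matrix.smul_apply,
      Finset.sum_apply, Pi.smul_apply, smul_eq_mul, Finset.sum_mul, Finset.mul_sum]
    rw [Finset.sum_comm]
    exact Finset.sum_congr rfl fun m _ => Finset.sum_congr rfl fun a _ => by ring
  have h2 : dotProduct (star x) (∑ m : Fin 4, (w m : ℂ) • (outerM (v m) *ᵥ x))
      = ∑ m : Fin 4, (w m : ℂ) * dotProduct (star x) (outerM (v m) *ᵥ x) := by
    simp only [dotProduct, Finset.sum_apply, Pi.smul_apply, smul_eq_mul,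
      Finset.mul_sum, Finset.sum_mul]
    rw [Finset.sum_comm]
    exact Finset.sum_congr rfl fun m _ => Finset.sum_congr rfl fun a _ => by ring
  rw [h1, h2]
  apply Finset.sum_nonneg
  intro m _
  rw [outer_quad]
  set z : ℂ := ∑ j, (starRingEnd ℂ) (v m j) * x j with hz
  have hzz : (starRingEnd ℂ) z * z = (Complex.normSq z : ℂ) := by
    rw [mul_comm, Complex.mul_conj]
  rw [hzz, ← Complex.ofReal_mul, Complex.zero_le_real]
  exact mul_nonneg (hw m) (Complex.normSq_nonneg z)

end MMaux

/-- **Achievability of the optimal M–M scheme.** For `n = ⌈π/θ⌉` there is a density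
matrix `ρ` nullifying the diagonal of `ρ U(θ)^{⊗n}`, so `n` uses suffice to identify
the two qubit observables. -/
theorem mm_scheme_achievable
    (θ : ℝ) (hθ : θ ∈ Set.Ioc 0 Real.pi)
    (n : ℕ) (hn : n = ⌈Real.pi / θ⌉₊)
    (U : Matrix (Fin 2) (Fin 2) ℂ)
    (hU : U = !![(Real.cos (θ / 2) : ℂ), (Real.sin (θ / 2) : ℂ);
                 (Real.sin (θ / 2) : ℂ), (-Real.cos (θ / 2) : ℂ)]) :
    ∃ ρ : Matrix (Fin n → Fin 2) (Fin n → Fin 2) ℂ,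
      ρ.PosSemidef ∧ ρ.trace = 1 ∧
      ∀ i : Fin n → Fin 2, (ρ * kronPow U n) i i = 0 := by
  obtain ⟨hθ0, hθπ⟩ := hθ
  -- angle bookkeeping
  set c1 : ℝ := Real.cos ((n : ℝ) * (θ / 2)) with hc1def
  set c0 : ℝ := Real.cos (((n % 2 : ℕ) : ℝ) * (θ / 2)) with hc0def
  have hπθ : (Real.pi / θ : ℝ) ≤ n := by
    rw [hn]; exact Nat.le_ceil _
  have hnlt : (n : ℝ) < Real.pi / θ + 1 := by
    rw [hn]; exact Nat.ceil_lt_add_one (by positivity)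
  have hc1 : c1 ≤ 0 := by
    apply Real.cos_nonpos_of_pi_div_two_le_of_le
    · have : Real.pi ≤ (n : ℝ) * θ := by
        calc Real.pi = (Real.pi / θ) * θ := by field_simp
        _ ≤ (n : ℝ) * θ := mul_le_mul_of_nonneg_right hπθ hθ0.le
      linarith
    · have : (n : ℝ) * θ < Real.pi + θ := by
        have := mul_lt_mul_of_pos_right hnlt hθ0
        calc (n : ℝ) * θ < (Real.pi / θ + 1) * θ := this
        _ = Real.pi + θ := by field_simp
      nlinarith [Real.pi_pos]
  have hmod : ((n % 2 : ℕ) : ℝ) ≤ 1 := by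
    have : n % 2 ≤ 1 := Nat.lt_succ_iff.mp (Nat.mod_lt _ (by norm_num))
    exact_mod_cast this
  have hmod0 : (0 : ℝ) ≤ ((n % 2 : ℕ) : ℝ) := by positivity
  have hc0 : 0 ≤ c0 := by
    apply Real.cos_nonneg_of_mem_Icc
    constructor
    · nlinarith [Real.pi_pos]
    · nlinarith [Real.pi_pos]
  -- the mixing weight
  set p : ℝ := c0 / (c0 - c1) with hpdef
  have hp0 : 0 ≤ p := div_nonneg hc0 (by linarith)
  have hp1 : p ≤ 1 := by
    by_cases hd : c0 - c1 = 0
    · rw [hpdef, hd, div_zero]; norm_num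
    · have hdpos : 0 < c0 - c1 := lt_of_le_of_ne (by linarith) (Ne.symm hd)
      rw [hpdef, div_le_one hdpos]; linarith
  have hkey : p * c1 + (1 - p) * c0 = 0 := by
    by_cases hd : c0 - c1 = 0
    · have h0 : c0 = 0 := le_antisymm (by linarith) hc0
      have h1 : c1 = 0 := by linarith
      rw [h0, h1]; ring
    · have : p * (c0 - c1) = c0 := div_mul_cancel₀ c0 hd
      linear_combination -this
  -- patterns
  set g2 : Fin n → ℝ := fun k => if (k : ℕ) < n / 2 then -1 else 1 with hg2def
  set G : Fin 4 → (Fin n → ℝ) :=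
    ![fun _ => 1, fun _ => -1, g2, fun k => -(g2 k)] with hGdef
  have hG : ∀ m k, G m k = 1 ∨ G m k = -1 := by
    intro m k
    fin_cases m <;> simp [hGdef, hg2def] <;> by_cases h : (k : ℕ) < n / 2 <;>
      simp [h]
  have hsum2 : ∑ k, g2 k = ((n % 2 : ℕ) : ℝ) := by
    have := Fin.sum_univ_eq_sum_range (fun k => if k < n / 2 then (-1 : ℝ) else 1) n
    rw [hg2def]
    rw [show (∑ k : Fin n, if (k : ℕ) < n / 2 then (-1 : ℝ) else 1)
        = ∑ k ∈ Finset.range n, (if k < n / 2 then (-1 : ℝ) else 1) from this]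
    rw [Finset.range_eq_Ico,
      ← Finset.sum_Ico_consecutive _ (Nat.zero_le (n / 2)) (Nat.div_le_self n 2)]
    rw [Finset.sum_congr rfl (fun k hk => if_pos (Finset.mem_Ico.mp hk).2),
      Finset.sum_congr rfl (g := fun _ => (1 : ℝ))
        (fun k hk => if_neg (not_lt.mpr (Finset.mem_Ico.mp hk).1))]
    simp only [Finset.sum_const, Nat.card_Ico, nsmul_eq_mul, mul_one, mul_neg,
      Nat.sub_zero]
    have h : n - n / 2 = n / 2 + n % 2 := by omega
    rw [h]
    push_cast
    ring
  have hsums : ∀ m : Fin 4, ∑ k, G m k =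
      (![(n : ℝ), -(n : ℝ), ((n % 2 : ℕ) : ℝ), -((n % 2 : ℕ) : ℝ)]) m := by
    intro m
    fin_cases m <;> simp [hGdef, hsum2, Finset.sum_neg_distrib]
  -- weights
  set q : ℝ := ((2 : ℝ) ^ n)⁻¹ with hqdef
  have hq0 : 0 ≤ q := by positivity
  set w : Fin 4 → ℝ :=
    ![q * (p / 2), q * (p / 2), q * ((1 - p) / 2), q * ((1 - p) / 2)] with hwdef
  have hw : ∀ m, 0 ≤ w m := by
    intro m
    fin_cases m <;>
      simp only [hwdef, Matrix.cons_val_zero, Matrix.cons_val_one, Matrix.head_cons,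
        Matrix.cons_val_two, Matrix.tail_cons, Matrix.cons_val_three] <;>
      apply mul_nonneg hq0 <;> linarith
  -- the density matrix
  refine ⟨∑ m : Fin 4, (w m : ℂ) • MMaux.outerM (MMaux.pvec (G m)), ?_, ?_, ?_⟩
  · rw [Matrix.posSemidef_iff_dotProduct_mulVec]
    constructor
    · -- Hermitian
      ext i j
      simp only [Matrix.conjTranspose_apply, Matrix.sum_apply, Matrix.smul_apply,
        MMaux.outerM, Matrix.of_apply, smul_eq_mul, star_sum]
      refine Finset.sum_congr rfl fun m _ => ?_
      simp only [star_mul', Complex.star_def, Complex.conj_ofReal, Complex.conj_conj]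
      ring
    · intro x
      exact MMaux.psd_sum w hw (fun m => MMaux.pvec (G m)) x
  · -- trace
    rw [Matrix.trace_sum]
    simp_rw [Matrix.trace_smul]
    have htr : ∀ m : Fin 4, (MMaux.outerM (MMaux.pvec (G m))).trace = (2 : ℂ) ^ n := by
      intro m
      rw [Matrix.trace]
      simp only [Matrix.diag_apply, MMaux.outerM, Matrix.of_apply]
      rw [Finset.sum_congr rfl fun i _ => MMaux.pvec_mul_conj (G m) (hG m) i]
      simp [Finset.card_univ, Fintype.card_fun]
    simp_rw [htr]
    have h2n : ((2 : ℂ) ^ n) ≠ 0 := by positivity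
    rw [Fin.sum_univ_four]
    simp only [hwdef, Matrix.cons_val_zero, Matrix.cons_val_one, Matrix.head_cons,
      Matrix.cons_val_two, Matrix.tail_cons, Matrix.cons_val_three]
    push_cast
    rw [hqdef]
    push_cast
    field_simp
    simp only [smul_eq_mul]
    field_simp
    ring
  · -- vanishing diagonal
    intro i
    rw [Matrix.sum_mul, Matrix.sum_apply]
    have hterm : ∀ m : Fin 4,
        (((w m : ℂ) • MMaux.outerM (MMaux.pvec (G m))) * kronPow U n) i i
          = (w m : ℂ) * (Complex.exp (((∑ k, G m k) * (θ / 2) : ℝ) * Complex.I)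
              * (∏ k, (![(1 : ℂ), -1]) (i k))) := by
      intro m
      rw [Matrix.smul_mul, Matrix.smul_apply, smul_eq_mul]
      congr 1
      have : (MMaux.outerM (MMaux.pvec (G m)) * kronPow U n) i i
          = MMaux.pvec (G m) i
            * ∑ j, (starRingEnd ℂ) (MMaux.pvec (G m) j) * kronPow U n j i := by
        rw [Matrix.mul_apply, Finset.mul_sum]
        exact Finset.sum_congr rfl fun j _ => by
          simp [MMaux.outerM, Matrix.of_apply]; ring
      rw [this, MMaux.rowsum θ U hU (G m) (hG m) i]
      rw [show MMaux.pvec (G m) i * (Complex.exp (((∑ k, G m k) * (θ / 2) : ℝ) * Complex.I)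
          * MMaux.pvec (G m) i)
        = Complex.exp (((∑ k, G m k) * (θ / 2) : ℝ) * Complex.I)
            * (MMaux.pvec (G m) i * MMaux.pvec (G m) i) from by ring]
      rw [MMaux.pvec_sq (G m) (hG m) i]
    rw [Finset.sum_congr rfl fun m _ => hterm m]
    simp_rw [hsums]
    rw [Fin.sum_univ_four]
    simp only [hwdef, Matrix.cons_val_zero, Matrix.cons_val_one, Matrix.head_cons,
      Matrix.cons_val_two, Matrix.tail_cons, Matrix.cons_val_three]
    set S : ℂ := ∏ k, (![(1 : ℂ), -1]) (i k) with hS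
    have hpair1 := MMaux.exp_pair ((n : ℝ) * (θ / 2))
    have hpair2 := MMaux.exp_pair (((n % 2 : ℕ) : ℝ) * (θ / 2))
    have hneg1 : (-(n : ℝ) * (θ / 2)) = -((n : ℝ) * (θ / 2)) := by ring
    have hneg2 : (-((n % 2 : ℕ) : ℝ) * (θ / 2)) = -(((n % 2 : ℕ) : ℝ) * (θ / 2)) := by
      ring
    rw [hneg1, hneg2]
    have hkeyC : ((p * c1 + (1 - p) * c0 : ℝ) : ℂ) = 0 := by rw [hkey]; norm_num
    rw [hc1def, hc0def] at hkeyC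
    push_cast at hpair1 hpair2 hkeyC ⊢
    linear_combination ((q : ℂ) * ((p : ℂ) / 2) * S) * hpair1
      + ((q : ℂ) * ((1 - (p : ℂ)) / 2) * S) * hpair2 + ((q : ℂ) * S) * hkeyC
end

section
/- Let θ ∈ [0, π], write a = cos(θ/2), b = sin(θ/2). Let H be a complex inner product space, and let α₀, α₁, β₀, β₁ ∈ H satisfy ⟨α₀, β₀⟩ = 0, ⟨α₁, β₁⟩ = 0, ‖α₀‖² + ‖α₁‖² = 1, and ‖β₀‖² + ‖β₁‖² = 1. Then |⟨α₀, a·β₀ + b·β₁⟩ + ⟨α₁, b·β₀ − a·β₁⟩| ≤ b. -/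
open Real

/-- **Cauchy–Schwarz estimate for `⟨ξ_S, ξ_T⟩`.** With `⟨α₀,β₀⟩ = ⟨α₁,β₁⟩ = 0` and both
pairs normalized, `|⟨α₀, aβ₀ + bβ₁⟩ + ⟨α₁, bβ₀ − aβ₁⟩| ≤ b`. -/
theorem overlap_le_sin
    (θ : ℝ) (hθ : θ ∈ Set.Icc 0 Real.pi)
    (a b : ℝ) (ha : a = Real.cos (θ / 2)) (hb : b = Real.sin (θ / 2))
    {H : Type*} [NormedAddCommGroup H] [InnerProductSpace ℂ H]
    (α₀ α₁ β₀ β₁ : H)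
    (h₀ : (inner ℂ α₀ β₀ : ℂ) = 0) (h₁ : (inner ℂ α₁ β₁ : ℂ) = 0)
    (hα : ‖α₀‖ ^ 2 + ‖α₁‖ ^ 2 = 1) (hβ : ‖β₀‖ ^ 2 + ‖β₁‖ ^ 2 = 1) :
    ‖(inner ℂ α₀ ((a : ℂ) • β₀ + (b : ℂ) • β₁) : ℂ)
        + (inner ℂ α₁ ((b : ℂ) • β₀ - (a : ℂ) • β₁) : ℂ)‖ ≤ b := by
  have hb0 : 0 ≤ b := by
    rw [hb]
    exact Real.sin_nonneg_of_nonneg_of_le_pi (by linarith [hθ.1]) (by linarith [hθ.2, Real.pi_nonneg])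
  rw [inner_add_right, inner_sub_right, inner_smul_right, inner_smul_right,
    inner_smul_right, inner_smul_right, h₀, h₁]
  have key : ‖(a:ℂ) * 0 + (b:ℂ) * inner ℂ α₀ β₁ + ((b:ℂ) * inner ℂ α₁ β₀ - (a:ℂ) * 0)‖
      ≤ b * (‖(inner ℂ α₀ β₁ : ℂ)‖ + ‖(inner ℂ α₁ β₀ : ℂ)‖) := by
    calc ‖(a:ℂ) * 0 + (b:ℂ) * inner ℂ α₀ β₁ + ((b:ℂ) * inner ℂ α₁ β₀ - (a:ℂ) * 0)‖
        = ‖(b:ℂ) * inner ℂ α₀ β₁ + (b:ℂ) * inner ℂ α₁ β₀‖ := by ring_nf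
      _ ≤ ‖(b:ℂ) * inner ℂ α₀ β₁‖ + ‖(b:ℂ) * inner ℂ α₁ β₀‖ :=
          norm_add_le _ _
      _ = b * (‖(inner ℂ α₀ β₁ : ℂ)‖ + ‖(inner ℂ α₁ β₀ : ℂ)‖) := by
          simp [norm_mul, Complex.norm_real, abs_of_nonneg hb0]; ring
  refine key.trans ?_
  have h1 : ‖(inner ℂ α₀ β₁ : ℂ)‖ ≤ ‖α₀‖ * ‖β₁‖ := by exact norm_inner_le_norm α₀ β₁
  have h2 : ‖(inner ℂ α₁ β₀ : ℂ)‖ ≤ ‖α₁‖ * ‖β₀‖ := by exact norm_inner_le_norm α₁ β₀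
  nlinarith [sq_nonneg (‖α₀‖ - ‖β₁‖), sq_nonneg (‖α₁‖ - ‖β₀‖),
    norm_nonneg (inner ℂ α₀ β₁ : ℂ), norm_nonneg (inner ℂ α₁ β₀ : ℂ)]
end

section
/- Let θ ∈ [0, π], write a = cos(θ/2), b = sin(θ/2). Let P₀ = e₀·e₀ᴴ, P₁ = e₁·e₁ᴴ be the standard rank-one projectors on ℂ², and let Q₀ = ψ₀·ψ₀ᴴ, Q₁ = ψ₁·ψ₁ᴴ where ψ₀ = (a, b) and ψ₁ = (b, −a). Then sin(θ/2) is the greatest element of the set { (1/2)·(|tr(ρ·(P₀ − Q₀))| + |tr(ρ·(P₁ − Q₁))|) : ρ a 2×2 positive semidefinite complex matrix with trace 1 }; that is, every element of this set is ≤ sin(θ/2) and the value sin(θ/2) is attained by some density matrix ρ. -/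
open Matrix Real
open scoped ComplexOrder

/-- **`D_max` for qubit observables.** For `S = σ_z` and `T` at Bloch angle `θ`, the
supremum over density matrices `ρ` of the trace distance
`(1/2)∑_m |tr(ρP_m) − tr(ρQ_m)|` of outcome distributions equals `sin(θ/2)`,
and it is attained. -/
theorem dmax_qubit_observables
    (θ : ℝ) (hθ : θ ∈ Set.Icc 0 Real.pi)
    (a b : ℝ) (ha : a = Real.cos (θ / 2)) (hb : b = Real.sin (θ / 2))
    (P₀ P₁ Q₀ Q₁ : Matrix (Fin 2) (Fin 2) ℂ)
    (hP₀ : P₀ = vecMulVec ![1, 0] (star ![1, 0]))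
    (hP₁ : P₁ = vecMulVec ![0, 1] (star ![0, 1]))
    (hQ₀ : Q₀ = vecMulVec ![(a : ℂ), (b : ℂ)] (star ![(a : ℂ), (b : ℂ)]))
    (hQ₁ : Q₁ = vecMulVec ![(b : ℂ), (-a : ℂ)] (star ![(b : ℂ), (-a : ℂ)])) :
    IsGreatest
      { x : ℝ | ∃ ρ : Matrix (Fin 2) (Fin 2) ℂ, ρ.PosSemidef ∧ ρ.trace = 1 ∧
          x = (1 / 2) * (‖(ρ * (P₀ - Q₀)).trace‖
            + ‖(ρ * (P₁ - Q₁)).trace‖) }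
      (Real.sin (θ / 2)) := by
  obtain ⟨hθ0, hθπ⟩ := hθ
  have ha0 : 0 ≤ a := ha ▸ Real.cos_nonneg_of_mem_Icc ⟨by linarith, by linarith⟩
  have hb0 : 0 ≤ b := hb ▸ Real.sin_nonneg_of_nonneg_of_le_pi (by linarith)
    (by nlinarith [Real.pi_pos])
  have hab : a ^ 2 + b ^ 2 = 1 := by rw [ha, hb]; exact Real.cos_sq_add_sin_sq _
  have hb1 : b ≤ 1 := by nlinarith
  have habC : (a : ℂ) ^ 2 + (b : ℂ) ^ 2 = 1 := by exact_mod_cast hab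
  -- the difference matrix
  have hM : P₀ - Q₀ = !![((b:ℂ))^2, -(a*b); -(a*b), -((b:ℂ))^2] := by
    subst hP₀ hQ₀
    ext i j
    fin_cases i <;> fin_cases j <;>
      simp only [Matrix.sub_apply, vecMulVec_apply] <;>
      simp [vecMulVec_apply, Pi.star_apply, Complex.star_def, Complex.conj_ofReal] <;>
      first
        | linear_combination -habC
        | linear_combination (-2:ℂ) * habC
        | linear_combination habC
        | linear_combination (2:ℂ) * habC
        | ring
  have hM' : P₁ - Q₁ = -(P₀ - Q₀) := by
    rw [hM]
    subst hP₁ hQ₁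
    ext i j
    fin_cases i <;> fin_cases j <;>
      simp only [Matrix.sub_apply, vecMulVec_apply] <;>
      simp [vecMulVec_apply, Pi.star_apply, Complex.star_def, Complex.conj_ofReal] <;>
      first
        | linear_combination -habC
        | linear_combination (-2:ℂ) * habC
        | linear_combination habC
        | linear_combination (2:ℂ) * habC
        | ring
  -- square-root facts
  have s1 : ((Real.sqrt (1 - b) : ℝ) : ℂ) ^ 2 = 1 - (b:ℂ) := by
    rw [← Complex.ofReal_pow, Real.sq_sqrt (by linarith)]; push_cast; ring
  have s2 : ((Real.sqrt (1 + b) : ℝ) : ℂ) ^ 2 = 1 + (b:ℂ) := by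
    rw [← Complex.ofReal_pow, Real.sq_sqrt (by linarith)]; push_cast; ring
  have s3 : ((Real.sqrt (1 - b) : ℝ) : ℂ) * ((Real.sqrt (1 + b) : ℝ) : ℂ) = (a : ℂ) := by
    rw [← Complex.ofReal_mul, ← Real.sqrt_mul (by linarith)]
    have : (1 - b) * (1 + b) = a ^ 2 := by nlinarith
    rw [this, Real.sqrt_sq ha0]
  have hbC : (0:ℂ) ≤ (b:ℂ) := by
    rw [Complex.nonneg_iff]; simp [hb0]
  constructor
  · -- membership: ρ = (I + H)/2
    refine ⟨(2:ℂ)⁻¹ • !![1 + (b:ℂ), -(a:ℂ); -(a:ℂ), 1 - (b:ℂ)], ?_, ?_, ?_⟩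
    · refine Matrix.PosSemidef.of_dotProduct_mulVec_nonneg ?_ ?_
      · ext i j
        fin_cases i <;> fin_cases j <;>
          simp [conjTranspose_apply, Complex.star_def, Complex.conj_ofReal]
      · intro x
        have key : star x ⬝ᵥ ((2:ℂ)⁻¹ • !![1 + (b:ℂ), -(a:ℂ); -(a:ℂ), 1 - (b:ℂ)]) *ᵥ x
            = (2:ℂ)⁻¹ * (star (((Real.sqrt (1+b) : ℝ):ℂ) * x 0 - ((Real.sqrt (1-b) : ℝ):ℂ) * x 1)
              * (((Real.sqrt (1+b) : ℝ):ℂ) * x 0 - ((Real.sqrt (1-b) : ℝ):ℂ) * x 1)) := by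
          simp [dotProduct, Matrix.mulVec, Fin.sum_univ_two, Complex.star_def,
            Complex.conj_ofReal, map_sub]
          ring_nf
          linear_combination (2:ℂ)⁻¹ * (starRingEnd ℂ) (x 0) * (x 1) * s3 +
            (2:ℂ)⁻¹ * (starRingEnd ℂ) (x 1) * (x 0) * s3 +
            ((2:ℂ)⁻¹ - 1) * ((starRingEnd ℂ) (x 0) * (x 0)) * s2 +
            ((2:ℂ)⁻¹ - 1) * ((x 1) * (starRingEnd ℂ) (x 1))* s1
        rw [key]
        have h2 : (0:ℂ) ≤ (2:ℂ)⁻¹ := by rw [Complex.nonneg_iff]; norm_num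
        exact mul_nonneg h2 (star_mul_self_nonneg _)
    · simp [Matrix.trace_fin_two]; ring
    · rw [hM', hM]
      have ht : (((2:ℂ)⁻¹ • !![1 + (b:ℂ), -(a:ℂ); -(a:ℂ), 1 - (b:ℂ)]) *
          !![((b:ℂ))^2, -(a*b); -(a*b), -((b:ℂ))^2]).trace = (b:ℂ) := by
        simp [Matrix.trace_fin_two, Matrix.mul_apply, Fin.sum_univ_two]
        ring_nf
        linear_combination (b:ℂ) * habC
      rw [mul_neg, trace_neg, norm_neg, ht, Complex.norm_real, Real.norm_eq_abs, abs_of_nonneg hb0, hb]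
      ring
  · -- upper bound
    rintro x ⟨ρ, hρ, hρtr, rfl⟩
    rw [hM']
    rw [mul_neg, trace_neg, norm_neg]
    have htr2 : ρ 0 0 + ρ 1 1 = 1 := by
      rw [← hρtr]; simp [Matrix.trace_fin_two]
    set t := (ρ * (P₀ - Q₀)).trace with htdef
    have ht : t = (b:ℂ)^2 * ρ 0 0 - a*b* ρ 0 1 - a*b* ρ 1 0 - (b:ℂ)^2 * ρ 1 1 := by
      rw [htdef, hM]; simp [Matrix.trace_fin_two, Matrix.mul_apply, Fin.sum_univ_two]; ring
    have h₁ := hρ.dotProduct_mulVec_nonneg ![((Real.sqrt (1-b) : ℝ):ℂ), ((Real.sqrt (1+b) : ℝ):ℂ)]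
    have h₂ := hρ.dotProduct_mulVec_nonneg ![((Real.sqrt (1+b) : ℝ):ℂ), -((Real.sqrt (1-b) : ℝ):ℂ)]
    simp [dotProduct, Matrix.mulVec, Fin.sum_univ_two, Complex.star_def,
      Complex.conj_ofReal] at h₁ h₂
    have h₁' := mul_nonneg hbC h₁
    have h₂' := sub_nonneg.mpr (mul_le_mul_of_nonneg_left h₂ hbC)
    have hle₁ : (0:ℂ) ≤ (b:ℂ) - t := by
      have e : (b:ℂ) * (((Real.sqrt (1-b) : ℝ):ℂ) * (ρ 0 0 * ((Real.sqrt (1-b) : ℝ):ℂ) + ρ 0 1 * ((Real.sqrt (1+b) : ℝ):ℂ))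
          + ((Real.sqrt (1+b) : ℝ):ℂ) * (ρ 1 0 * ((Real.sqrt (1-b) : ℝ):ℂ) + ρ 1 1 * ((Real.sqrt (1+b) : ℝ):ℂ)))
          = (b:ℂ) - t := by
        linear_combination (b:ℂ) * (ρ 0 0) * s1 + (b:ℂ) * (ρ 0 1 + ρ 1 0) * s3 +
          (b:ℂ) * (ρ 1 1) * s2 + ht + (b:ℂ) * htr2
      rwa [e] at h₁'
    have hle₂ : (0:ℂ) ≤ (b:ℂ) + t := by
      have e : (b:ℂ) * (((Real.sqrt (1+b) : ℝ):ℂ) * (ρ 0 0 * ((Real.sqrt (1+b) : ℝ):ℂ) + -(ρ 0 1 * ((Real.sqrt (1-b) : ℝ):ℂ))))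
          - (b:ℂ) * (((Real.sqrt (1-b) : ℝ):ℂ) * (ρ 1 0 * ((Real.sqrt (1+b) : ℝ):ℂ) + -(ρ 1 1 * ((Real.sqrt (1-b) : ℝ):ℂ))))
          = (b:ℂ) + t := by
        linear_combination (b:ℂ) * (ρ 0 0) * s2 - (b:ℂ) * (ρ 0 1 + ρ 1 0) * s3 +
          (b:ℂ) * (ρ 1 1) * s1 - ht + (b:ℂ) * htr2
      rwa [e] at h₂'
    rw [Complex.nonneg_iff] at hle₁ hle₂
    obtain ⟨r₁, i₁⟩ := hle₁
    obtain ⟨r₂, i₂⟩ := hle₂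
    have him : t.im = 0 := by
      simp [Complex.sub_im, Complex.add_im, Complex.ofReal_im] at i₁ i₂
      linarith
    have habs : ‖t‖ = |t.re| := by
      have h : t = ((t.re : ℝ) : ℂ) := Complex.ext rfl (by simp [him])
      rw [h, Complex.norm_real, Real.norm_eq_abs]
      simp
    have hr₁ : t.re ≤ b := by
      have := Complex.sub_re (b:ℂ) t ▸ r₁
      simp [Complex.sub_re, Complex.ofReal_re] at r₁; linarith
    have hr₂ : -b ≤ t.re := by
      simp [Complex.add_re, Complex.ofReal_re] at r₂; linarith
    rw [habs, ← hb]
    have habs2 : |t.re| ≤ b := abs_le.mpr ⟨hr₂, hr₁⟩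
    linarith
end
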